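/- The discrete q-Hermite I polynomials satisfy h_n(x;q) = Σ_{j=0}^n q^{binom(n−j,2)} qbinomial(n,j) (x−1)(x−q)···(x−q^{j−1}). -/

import Mathlib

noncomputable section

/-- The q-integer `[n]_q = (1 - q^n)/(1 - q)`. -/
def qnat (q : ℝ) (n : ℕ) : ℝ := (1 - q ^ n) / (1 - q)

/-- The q-factorial `[n]_q!`. -/
def qfac (q : ℝ) (n : ℕ) : ℝ := ∏ j ∈ Finset.range n, qnat q (j + 1)

/-- The Gaussian binomial coefficient. -/
def qbinom (q : ℝ) (n k : ℕ) : ℝ := qfac q n / (qfac q k * qfac q (n - k))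

/-- The odd q-double factorial `[2k-1]_q!! = [1]_q [3]_q ⋯ [2k-1]_q`. -/
def qdf (q : ℝ) (k : ℕ) : ℝ := ∏ i ∈ Finset.range k, qnat q (2 * i + 1)

/-- The bivariate q-Hermite polynomial
`H n (x,s,q) = ∑_{2k ≤ n} (-s)^k q^(k²) qbinom(n,2k) [2k-1]_q!! x^(n-2k)`. -/
def qHermite (q s : ℝ) (n : ℕ) (x : ℝ) : ℝ :=
  ∑ k ∈ Finset.range (n / 2 + 1),
    (-s) ^ k * q ^ (k ^ 2) * qbinom q n (2 * k) * qdf q k * x ^ (n - 2 * k)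

end

/-- The q-Pochhammer symbol `(q; q²)_k = ∏_{i<k} (1 - q^(2i+1))`. -/
noncomputable def qPochOdd (q : ℝ) (k : ℕ) : ℝ := ∏ i ∈ Finset.range k, (1 - q ^ (2 * i + 1))

/-- The discrete q-Hermite I polynomial
`h n (x;q) = ∑_{2k ≤ n} (-1)^k q^(k²-k) qbinom(n,2k) (q;q²)_k x^(n-2k)`. -/
noncomputable def discqHermiteI (q : ℝ) (n : ℕ) (x : ℝ) : ℝ :=
  ∑ k ∈ Finset.range (n / 2 + 1),
    (-1 : ℝ) ^ k * q ^ (k ^ 2 - k) * qbinom q n (2 * k) * qPochOdd q k * x ^ (n - 2 * k)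

/-!
Both sides satisfy `y (n + 2) = x * y (n + 1) - q ^ n * (1 - q ^ (n + 1)) * y n` with `y 0 = 1`,
`y 1 = x`. For the Newton expansion this follows from `x * (x;q)_j = (x;q)_{j+1} + q ^ j (x;q)_j`,
the q-Pascal rule `[n+1, k+1] = q ^ (k+1) [n, k+1] + [n, k]` and the absorption identity
`(1 - q ^ (n+1-k)) [n+1, k] = (1 - q ^ (n+1)) [n, k]`; for `h_n` it follows from the mirrored
Pascal rule `[n+1, k+1] = [n, k+1] + q ^ (n-k) [n, k]` and
`(1 - q ^ (k+1)) [n+1, k+1] = (1 - q ^ (n+1)) [n, k]`, using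
`(q;q²)_{k+1} = (q;q²)_k (1 - q ^ (2k+1))`.
-/

open Finset

variable {q : ℝ}

theorem qfac_succ (q : ℝ) (m : ℕ) : qfac q (m + 1) = qfac q m * qnat q (m + 1) :=
  prod_range_succ _ _

theorem one_sub_pow_succ_ne_zero (hq : ∀ m : ℕ, q ^ (m + 1) ≠ 1) (m : ℕ) :
    1 - q ^ (m + 1) ≠ 0 :=
  sub_ne_zero.2 (hq m).symm

theorem qnat_succ_ne_zero (hq : ∀ m : ℕ, q ^ (m + 1) ≠ 1) (m : ℕ) : qnat q (m + 1) ≠ 0 :=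
  div_ne_zero (one_sub_pow_succ_ne_zero hq m) (by simpa using one_sub_pow_succ_ne_zero hq 0)

theorem qfac_ne_zero (hq : ∀ m : ℕ, q ^ (m + 1) ≠ 1) (m : ℕ) : qfac q m ≠ 0 :=
  prod_ne_zero_iff.2 fun j _ => qnat_succ_ne_zero hq j

theorem qfac_zero (q : ℝ) : qfac q 0 = 1 := prod_range_zero _

theorem qbinom_zero_right (hq : ∀ m : ℕ, q ^ (m + 1) ≠ 1) (n : ℕ) : qbinom q n 0 = 1 := by
  rw [qbinom, qfac_zero, one_mul, Nat.sub_zero, div_self (qfac_ne_zero hq n)]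

theorem qbinom_self (hq : ∀ m : ℕ, q ^ (m + 1) ≠ 1) (n : ℕ) : qbinom q n n = 1 := by
  rw [qbinom, Nat.sub_self, qfac_zero, mul_one, div_self (qfac_ne_zero hq n)]

/-- The Gaussian binomial coefficient, extended by zero to `n < k` (where `qbinom` is junk). -/
noncomputable def gaussBinom (q : ℝ) (n k : ℕ) : ℝ := if k ≤ n then qbinom q n k else 0

theorem gaussBinom_of_le {n k : ℕ} (h : k ≤ n) : gaussBinom q n k = qbinom q n k := if_pos h

theorem gaussBinom_of_lt {n k : ℕ} (h : n < k) : gaussBinom q n k = 0 := if_neg (by omega)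

theorem gaussBinom_zero_right (hq : ∀ m : ℕ, q ^ (m + 1) ≠ 1) (n : ℕ) :
    gaussBinom q n 0 = 1 := by
  rw [gaussBinom_of_le n.zero_le, qbinom_zero_right hq]

theorem one_sub_pow_mul_gaussBinom_succ_succ (hq : ∀ m : ℕ, q ^ (m + 1) ≠ 1) (n k : ℕ) :
    (1 - q ^ (k + 1)) * gaussBinom q (n + 1) (k + 1) = (1 - q ^ (n + 1)) * gaussBinom q n k := by
  rcases le_or_gt k n with h | h
  · obtain ⟨a, rfl⟩ := Nat.exists_eq_add_of_le h
    rw [gaussBinom_of_le (by omega), gaussBinom_of_le h]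
    simp only [qbinom, Nat.add_sub_cancel_left, show k + a + 1 - (k + 1) = a by omega]
    rw [qfac_succ _ (k + a), qfac_succ _ k]
    have := qfac_ne_zero hq (k + a)
    have := qfac_ne_zero hq k
    have := qfac_ne_zero hq a
    have := one_sub_pow_succ_ne_zero hq k
    have := one_sub_pow_succ_ne_zero hq 0
    simp only [qnat, zero_add, pow_one] at *
    field_simp
  · rw [gaussBinom_of_lt h, gaussBinom_of_lt (by omega), mul_zero, mul_zero]

theorem one_sub_pow_sub_mul_gaussBinom_succ (hq : ∀ m : ℕ, q ^ (m + 1) ≠ 1) (n k : ℕ) :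
    (1 - q ^ (n + 1 - k)) * gaussBinom q (n + 1) k = (1 - q ^ (n + 1)) * gaussBinom q n k := by
  rcases le_or_gt k n with h | h
  · obtain ⟨a, rfl⟩ := Nat.exists_eq_add_of_le h
    rw [gaussBinom_of_le (by omega), gaussBinom_of_le h]
    simp only [qbinom, Nat.add_sub_cancel_left, show k + a + 1 - k = a + 1 by omega]
    rw [qfac_succ _ (k + a), qfac_succ _ a]
    have := qfac_ne_zero hq (k + a)
    have := qfac_ne_zero hq k
    have := qfac_ne_zero hq a
    have := one_sub_pow_succ_ne_zero hq a
    have := one_sub_pow_succ_ne_zero hq 0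
    simp only [qnat, zero_add, pow_one] at *
    field_simp
  · rw [gaussBinom_of_lt h, show n + 1 - k = 0 by omega]
    simp

theorem gaussBinom_mul_eq_mul {n k : ℕ} {a b : ℝ} (h : k ≤ n → a = b) :
    gaussBinom q n k * a = gaussBinom q n k * b := by
  rcases le_or_gt k n with hk | hk
  · rw [h hk]
  · simp [gaussBinom_of_lt hk]

theorem gaussBinom_succ_succ (hq : ∀ m : ℕ, q ^ (m + 1) ≠ 1) (n k : ℕ) :
    gaussBinom q (n + 1) (k + 1) = gaussBinom q n (k + 1) + q ^ (n - k) * gaussBinom q n k := by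
  have hA := one_sub_pow_mul_gaussBinom_succ_succ hq n k
  have hA' := one_sub_pow_sub_mul_gaussBinom_succ hq n (k + 1)
  have hexp : gaussBinom q (n + 1) (k + 1) * (q ^ (n - k) * q ^ (k + 1)) =
      gaussBinom q (n + 1) (k + 1) * q ^ (n + 1) :=
    gaussBinom_mul_eq_mul fun h => by rw [← pow_add]; congr 1; omega
  rw [Nat.add_sub_add_right] at hA'
  refine mul_left_cancel₀ (one_sub_pow_succ_ne_zero hq n) ?_
  linear_combination hA' + q ^ (n - k) * hA + hexp

theorem gaussBinom_succ_succ' (hq : ∀ m : ℕ, q ^ (m + 1) ≠ 1) (n k : ℕ) :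
    gaussBinom q (n + 1) (k + 1) = q ^ (k + 1) * gaussBinom q n (k + 1) + gaussBinom q n k := by
  have hA := one_sub_pow_mul_gaussBinom_succ_succ hq n k
  have hA' := one_sub_pow_sub_mul_gaussBinom_succ hq n (k + 1)
  have hexp : gaussBinom q (n + 1) (k + 1) * (q ^ (n - k) * q ^ (k + 1)) =
      gaussBinom q (n + 1) (k + 1) * q ^ (n + 1) :=
    gaussBinom_mul_eq_mul fun h => by rw [← pow_add]; congr 1; omega
  rw [Nat.add_sub_add_right] at hA'
  refine mul_left_cancel₀ (one_sub_pow_succ_ne_zero hq n) ?_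
  linear_combination q ^ (k + 1) * hA' + hA + hexp

theorem choose_two_succ (m : ℕ) : (m + 1).choose 2 = m.choose 2 + m := by
  rw [Nat.choose_succ_succ', Nat.choose_one_right, add_comm]

theorem choose_two_succ_sub (n j : ℕ) : (n + 1 - j).choose 2 = (n - j).choose 2 + (n - j) := by
  rcases le_or_gt j n with h | h
  · rw [Nat.succ_sub h, choose_two_succ]
  · simp [Nat.sub_eq_zero_of_le h, Nat.sub_eq_zero_of_le h.le]

noncomputable def newtonExpansion (q : ℝ) (n : ℕ) (x : ℝ) : ℝ :=
  ∑ j ∈ range (n + 1), q ^ ((n - j).choose 2) * qbinom q n j * ∏ i ∈ range j, (x - q ^ i)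

noncomputable def newtonBasis (q x : ℝ) (j : ℕ) : ℝ := ∏ i ∈ range j, (x - q ^ i)

theorem newtonBasis_zero (q x : ℝ) : newtonBasis q x 0 = 1 := prod_range_zero _

theorem mul_newtonBasis (q x : ℝ) (j : ℕ) :
    x * newtonBasis q x j = newtonBasis q x (j + 1) + q ^ j * newtonBasis q x j := by
  simp only [newtonBasis, prod_range_succ]
  ring

noncomputable def newtonCoeff (q : ℝ) (n j : ℕ) : ℝ :=
  q ^ ((n - j).choose 2) * gaussBinom q n j

theorem newtonExpansion_eq_sum {n N : ℕ} (hN : n < N) (x : ℝ) :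
    newtonExpansion q n x = ∑ j ∈ range N, newtonCoeff q n j * newtonBasis q x j := by
  rw [eventually_constant_sum (fun j hj => by rw [newtonCoeff, gaussBinom_of_lt hj]; ring) hN]
  refine sum_congr rfl fun j hj => ?_
  rw [newtonCoeff, gaussBinom_of_le (Nat.lt_succ_iff.1 (mem_range.1 hj)), newtonBasis]

theorem newtonCoeff_succ_succ_zero (hq : ∀ m : ℕ, q ^ (m + 1) ≠ 1) (n : ℕ) :
    newtonCoeff q (n + 2) 0 =
      newtonCoeff q (n + 1) 0 - q ^ n * (1 - q ^ (n + 1)) * newtonCoeff q n 0 := by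
  simp only [newtonCoeff, gaussBinom_zero_right hq, Nat.sub_zero]
  rw [choose_two_succ (n + 1), choose_two_succ n]
  ring

theorem newtonCoeff_succ_succ_succ (hq : ∀ m : ℕ, q ^ (m + 1) ≠ 1) (n j : ℕ) :
    newtonCoeff q (n + 2) (j + 1) =
      newtonCoeff q (n + 1) j + q ^ (j + 1) * newtonCoeff q (n + 1) (j + 1)
        - q ^ n * (1 - q ^ (n + 1)) * newtonCoeff q n (j + 1) := by
  have hexp : gaussBinom q n (j + 1) * (q ^ (j + 1) * q ^ ((n - j).choose 2)) =
      gaussBinom q n (j + 1) * (q ^ n * q ^ ((n - (j + 1)).choose 2)) :=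
    gaussBinom_mul_eq_mul fun h => by
      obtain ⟨b, rfl⟩ := Nat.exists_eq_add_of_le h
      rw [show j + 1 + b - j = b + 1 by omega, Nat.add_sub_cancel_left, choose_two_succ]
      ring
  have habs := one_sub_pow_sub_mul_gaussBinom_succ hq n (j + 1)
  simp only [newtonCoeff, gaussBinom_succ_succ' hq (n + 1) j, Nat.add_sub_add_right,
    show n + 2 - (j + 1) = n + 1 - j by omega, choose_two_succ_sub, pow_add] at habs ⊢
  linear_combination (-(q ^ j * q ^ 1 * q ^ (n - j).choose 2)) * habs - (1 - q ^ n * q ^ 1) * hexp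

theorem newtonExpansion_succ_succ (hq : ∀ m : ℕ, q ^ (m + 1) ≠ 1) (n : ℕ) (x : ℝ) :
    newtonExpansion q (n + 2) x =
      x * newtonExpansion q (n + 1) x - q ^ n * (1 - q ^ (n + 1)) * newtonExpansion q n x := by
  set P := newtonBasis q x
  have hE2 : newtonExpansion q (n + 2) x =
      newtonCoeff q (n + 2) 0 +
        ∑ j ∈ range (n + 2), newtonCoeff q (n + 2) (j + 1) * P (j + 1) := by
    rw [newtonExpansion_eq_sum (by omega : n + 2 < n + 3), sum_range_succ', newtonBasis_zero,
      mul_one, add_comm]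
  have hE1 : x * newtonExpansion q (n + 1) x =
      ∑ j ∈ range (n + 2), newtonCoeff q (n + 1) j * P (j + 1) + (newtonCoeff q (n + 1) 0 +
        ∑ j ∈ range (n + 2), q ^ (j + 1) * newtonCoeff q (n + 1) (j + 1) * P (j + 1)) := by
    rw [newtonExpansion_eq_sum (by omega : n + 1 < n + 3), mul_sum]
    simp only [mul_left_comm x, mul_newtonBasis, mul_add, sum_add_distrib]
    rw [sum_range_succ _ (n + 2), sum_range_succ' _ (n + 2)]
    simp [P, newtonBasis_zero, gaussBinom_of_lt, newtonCoeff, mul_left_comm, mul_assoc, add_comm]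
  have hE0 : newtonExpansion q n x =
      newtonCoeff q n 0 + ∑ j ∈ range (n + 2), newtonCoeff q n (j + 1) * P (j + 1) := by
    rw [newtonExpansion_eq_sum (by omega : n < n + 3), sum_range_succ', newtonBasis_zero,
      mul_one, add_comm]
  rw [hE2, hE1, hE0, newtonCoeff_succ_succ_zero hq]
  simp only [newtonCoeff_succ_succ_succ hq, sub_mul, add_mul, sum_add_distrib, sum_sub_distrib,
    mul_assoc, ← mul_sum]
  ring

noncomputable def hermiteCoeff (q : ℝ) (n k : ℕ) : ℝ :=
  (-1) ^ k * q ^ (k ^ 2 - k) * qPochOdd q k * gaussBinom q n (2 * k)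

theorem discqHermiteI_eq_sum {n N : ℕ} (hN : n / 2 < N) (x : ℝ) :
    discqHermiteI q n x = ∑ k ∈ range N, hermiteCoeff q n k * x ^ (n - 2 * k) := by
  rw [eventually_constant_sum
    (fun k hk => by rw [hermiteCoeff, gaussBinom_of_lt (by omega)]; ring) hN]
  refine sum_congr rfl fun k hk => ?_
  rw [hermiteCoeff, gaussBinom_of_le (by have := mem_range.1 hk; omega)]
  ring

theorem hermiteCoeff_zero_right (hq : ∀ m : ℕ, q ^ (m + 1) ≠ 1) (n : ℕ) :
    hermiteCoeff q n 0 = 1 := by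
  simp [hermiteCoeff, qPochOdd, gaussBinom_zero_right hq]

theorem hermiteCoeff_succ_succ_succ (hq : ∀ m : ℕ, q ^ (m + 1) ≠ 1) (n k : ℕ) :
    hermiteCoeff q (n + 2) (k + 1) =
      hermiteCoeff q (n + 1) (k + 1) - q ^ n * (1 - q ^ (n + 1)) * hermiteCoeff q n k := by
  have hexp : gaussBinom q n (2 * k) * (q ^ (2 * k) * q ^ (n - 2 * k)) =
      gaussBinom q n (2 * k) * q ^ n :=
    gaussBinom_mul_eq_mul fun h => by rw [← pow_add, Nat.add_sub_cancel' h]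
  have habs := one_sub_pow_mul_gaussBinom_succ_succ hq n (2 * k)
  have hsq : (k + 1) ^ 2 - (k + 1) = k ^ 2 - k + 2 * k := by
    have : k ≤ k ^ 2 := Nat.le_self_pow two_ne_zero k
    ring_nf
    omega
  rw [hermiteCoeff, hermiteCoeff, hermiteCoeff, hsq, show 2 * (k + 1) = 2 * k + 1 + 1 by ring,
    gaussBinom_succ_succ hq (n + 1), show n + 1 - (2 * k + 1) = n - 2 * k by omega, qPochOdd,
    prod_range_succ, ← qPochOdd]
  linear_combination (-(-1) ^ k * q ^ (k ^ 2 - k) * qPochOdd q k) *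
    (q ^ (2 * k) * q ^ (n - 2 * k) * habs + (1 - q ^ (n + 1)) * hexp)

theorem discqHermiteI_succ_succ (hq : ∀ m : ℕ, q ^ (m + 1) ≠ 1) (n : ℕ) (x : ℝ) :
    discqHermiteI q (n + 2) x =
      x * discqHermiteI q (n + 1) x - q ^ n * (1 - q ^ (n + 1)) * discqHermiteI q n x := by
  have hH2 : discqHermiteI q (n + 2) x =
      x ^ (n + 2) +
        ∑ k ∈ range (n / 2 + 1), hermiteCoeff q (n + 2) (k + 1) * x ^ (n - 2 * k) := by
    rw [discqHermiteI_eq_sum (by omega : (n + 2) / 2 < n / 2 + 2) x, sum_range_succ',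
      hermiteCoeff_zero_right hq, add_comm]
    simp only [one_mul, Nat.mul_zero, Nat.sub_zero,
      show ∀ k, n + 2 - 2 * (k + 1) = n - 2 * k by omega]
  have hH1 : x * discqHermiteI q (n + 1) x =
      x ^ (n + 2) +
        ∑ k ∈ range (n / 2 + 1), hermiteCoeff q (n + 1) (k + 1) * x ^ (n - 2 * k) := by
    rw [discqHermiteI_eq_sum (by omega : (n + 1) / 2 < n / 2 + 2) x, sum_range_succ',
      hermiteCoeff_zero_right hq, mul_add, mul_sum, add_comm]
    congr 1
    · rw [one_mul, Nat.mul_zero, Nat.sub_zero, ← pow_succ']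
    refine sum_congr rfl fun k _ => ?_
    have hpow : gaussBinom q (n + 1) (2 * (k + 1)) * (x * x ^ (n + 1 - 2 * (k + 1))) =
        gaussBinom q (n + 1) (2 * (k + 1)) * x ^ (n - 2 * k) :=
      gaussBinom_mul_eq_mul fun h => by rw [← pow_succ']; congr 1; omega
    rw [hermiteCoeff]
    linear_combination (-1) ^ (k + 1) * q ^ ((k + 1) ^ 2 - (k + 1)) * qPochOdd q (k + 1) * hpow
  rw [hH2, hH1, discqHermiteI_eq_sum (Nat.lt_succ_self _) x]
  simp only [hermiteCoeff_succ_succ_succ hq, sub_mul, sum_sub_distrib, mul_assoc, ← mul_sum]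
  ring

theorem discqHermiteI_zero (q x : ℝ) : discqHermiteI q 0 x = 1 := by
  simp [discqHermiteI, qbinom, qfac_zero, qPochOdd]

theorem discqHermiteI_one (hq : ∀ m : ℕ, q ^ (m + 1) ≠ 1) (x : ℝ) :
    discqHermiteI q 1 x = x := by
  simp [discqHermiteI, qbinom_zero_right hq, qPochOdd]

theorem newtonExpansion_zero (q x : ℝ) : newtonExpansion q 0 x = 1 := by
  simp [newtonExpansion, qbinom, qfac_zero]

theorem newtonExpansion_one (hq : ∀ m : ℕ, q ^ (m + 1) ≠ 1) (x : ℝ) :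
    newtonExpansion q 1 x = x := by
  simp [newtonExpansion, sum_range_succ, qbinom_zero_right hq, qbinom_self hq]

theorem discqHermiteI_expansion (q : ℝ) (hq : 0 < q) (hq1 : q < 1) (n : ℕ) (x : ℝ) :
    discqHermiteI q n x =
      ∑ j ∈ Finset.range (n + 1),
        q ^ ((n - j).choose 2) * qbinom q n j * ∏ i ∈ Finset.range j, (x - q ^ i) := by
  have hroot : ∀ m : ℕ, q ^ (m + 1) ≠ 1 := fun m =>
    (pow_lt_one₀ hq.le hq1 m.succ_ne_zero).ne
  change discqHermiteI q n x = newtonExpansion q n x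
  induction n using Nat.twoStepInduction with
  | zero => rw [discqHermiteI_zero, newtonExpansion_zero]
  | one => rw [discqHermiteI_one hroot, newtonExpansion_one hroot]
  | more n ih ih' =>
    rw [discqHermiteI_succ_succ hroot, newtonExpansion_succ_succ hroot, ih, ih']
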